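/- arXiv:1706.08113 — 2 statements merged into one kernel-verified Lean document; each statement's English description precedes it below -/
import Mathlib

section
/- For 0 < δ < 1, the equation tan(x) = x/(1-δ) has a unique solution x_M in the interval (0, π/2), and x_M → 0 as δ → 0; moreover for small δ, x_M satisfies x_M² = 3δ + O(δ²) in the sense that x_M/√(3δ) → 1 as δ → 0⁺. -/
/-!
Since `tan` is strictly convex on `[0, π/2)` and vanishes at `0`, the secant slope
`tan x / x` increases strictly on `(0, π/2)`, from `1` at `0⁺` to `∞` at `π/2`; so
`tan x / x = (1 - δ)⁻¹` has exactly one root `x_M`, and monotonicity forces `x_M → 0` as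
`δ → 0⁺`. At the root `δ = 1 - x_M cot x_M`, and the Taylor bounds for `sin` and `cos` give
`1 - x cot x = x²/3 + o(x²)`, whence `x_M / √(3δ) → 1`.
-/

open Real Filter Topology Set

lemma strictConvexOn_tan : StrictConvexOn ℝ (Ico 0 (π / 2)) tan := by
  have hcos : ∀ x ∈ Ico (0 : ℝ) (π / 2), 0 < cos x := fun x hx =>
    cos_pos_of_mem_Ioo ⟨by linarith [hx.1, pi_pos], hx.2⟩
  refine StrictMonoOn.strictConvexOn_of_deriv (convex_Ico _ _)
    (continuousOn_tan.mono fun x hx => (hcos x hx).ne') ?_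
  rw [interior_Ico]
  intro x hx y hy hxy
  have hcy : 0 < cos y := hcos y (Ioo_subset_Ico_self hy)
  have hcxy : cos y < cos x :=
    cos_lt_cos_of_nonneg_of_le_pi hx.1.le (by linarith [hy.2, pi_pos]) hxy
  simp only [deriv_tan]
  gcongr

lemma strictMonoOn_tan_div_self : StrictMonoOn (fun x => tan x / x) (Ioo 0 (π / 2)) := by
  intro x hx y hy hxy
  simpa using strictConvexOn_tan.secant_strict_mono (a := 0) ⟨le_rfl, by positivity⟩
    (Ioo_subset_Ico_self hx) (Ioo_subset_Ico_self hy) hx.1.ne' hy.1.ne' hxy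

lemma tendsto_sin_div_self : Tendsto (fun x => sin x / x) (𝓝[≠] 0) (𝓝 1) := by
  have h := (continuous_sinc.tendsto 0).mono_left (nhdsWithin_le_nhds (s := {0}ᶜ))
  rw [sinc_zero] at h
  refine h.congr' ?_
  filter_upwards [self_mem_nhdsWithin] with x hx
  exact sinc_of_ne_zero hx

lemma tendsto_tan_div_self : Tendsto (fun x => tan x / x) (𝓝[≠] 0) (𝓝 1) := by
  have hcos : Tendsto cos (𝓝[≠] 0) (𝓝 1) := by
    simpa using (continuous_cos.tendsto 0).mono_left nhdsWithin_le_nhds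
  have h := tendsto_sin_div_self.div hcos one_ne_zero
  rw [div_one] at h
  refine h.congr fun x => ?_
  simp only [Pi.div_apply, tan_eq_sin_div_cos]
  ring

lemma exists_tan_div_self_eq {c : ℝ} (hc : 1 < c) : ∃ x ∈ Ioo 0 (π / 2), tan x / x = c := by
  set b := arctan (c * (π / 2))
  have hb : b ∈ Ioo 0 (π / 2) :=
    ⟨arctan_pos.2 (by positivity), arctan_lt_pi_div_two _⟩
  have hcb : c < tan b / b := by
    rw [tan_arctan, lt_div_iff₀ hb.1]
    exact mul_lt_mul_of_pos_left hb.2 (by linarith)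
  obtain ⟨a, hac, hab⟩ : ∃ a, tan a / a < c ∧ a ∈ Ioo 0 b :=
    (((tendsto_tan_div_self.mono_left (nhdsGT_le_nhdsNE 0)).eventually
      (gt_mem_nhds hc)).and (Ioo_mem_nhdsGT hb.1)).exists
  have hcont : ContinuousOn (fun x => tan x / x) (Icc a b) := by
    refine ContinuousOn.div (continuousOn_tan.mono fun x hx => ?_) continuousOn_id
      fun x hx => (hab.1.trans_le hx.1).ne'
    exact (cos_pos_of_mem_Ioo ⟨by linarith [hab.1, hx.1, pi_pos], hx.2.trans_lt hb.2⟩).ne'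
  obtain ⟨x, hx, hxc⟩ := intermediate_value_Ioo hab.2.le hcont ⟨hac, hcb⟩
  exact ⟨x, ⟨hab.1.trans hx.1, hx.2.trans hb.2⟩, hxc⟩

lemma abs_sin_sub_mul_cos_sub_cube_div_three_le {x : ℝ} (hx : |x| ≤ 1) :
    |sin x - x * cos x - x ^ 3 / 3| ≤ |x| ^ 5 := by
  have hcos : |x * (cos x - (1 - x ^ 2 / 2))| ≤ |x| * (|x| ^ 4 * (5 / 96)) := by
    rw [abs_mul]
    exact mul_le_mul_of_nonneg_left (cos_bound hx) (abs_nonneg x)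
  calc |sin x - x * cos x - x ^ 3 / 3|
      = |(sin x - (x - x ^ 3 / 6)) - x * (cos x - (1 - x ^ 2 / 2))| := by ring_nf
    _ ≤ |x| ^ 5 / 100 + |x| * (|x| ^ 4 * (5 / 96)) :=
      (abs_sub _ _).trans (add_le_add (sin_bound hx) hcos)
    _ ≤ |x| ^ 5 := by nlinarith [pow_nonneg (abs_nonneg x) 5]

lemma tendsto_sin_sub_mul_cos_div_cube :
    Tendsto (fun x => (sin x - x * cos x) / x ^ 3) (𝓝[≠] 0) (𝓝 (1 / 3)) := by
  have hbound :
      ∀ᶠ x in 𝓝[≠] (0 : ℝ), ‖(sin x - x * cos x) / x ^ 3 - 1 / 3‖ ≤ x ^ 2 := by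
    filter_upwards [self_mem_nhdsWithin,
      nhdsWithin_le_nhds (Metric.closedBall_mem_nhds (0 : ℝ) one_pos)] with x (hx0 : x ≠ 0) hx1
    have hx1 : |x| ≤ 1 := by simpa using hx1
    have hx3 : 0 < |x| ^ 3 := pow_pos (abs_pos.2 hx0) 3
    rw [Real.norm_eq_abs, show (sin x - x * cos x) / x ^ 3 - 1 / 3
        = (sin x - x * cos x - x ^ 3 / 3) / x ^ 3 by field_simp, abs_div, abs_pow,
      div_le_iff₀ hx3]
    calc _ ≤ |x| ^ 5 := abs_sin_sub_mul_cos_sub_cube_div_three_le hx1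
      _ = x ^ 2 * |x| ^ 3 := by rw [← sq_abs x]; ring
  have hzero : Tendsto (fun x : ℝ => x ^ 2) (𝓝[≠] 0) (𝓝 0) := by
    simpa using ((continuous_pow 2).tendsto (0 : ℝ)).mono_left nhdsWithin_le_nhds
  simpa using (squeeze_zero_norm' hbound hzero).add_const (1 / 3 : ℝ)

lemma tendsto_one_sub_div_tan_div_sq :
    Tendsto (fun x => (1 - x / tan x) / x ^ 2) (𝓝[≠] 0) (𝓝 (1 / 3)) := by
  have h := tendsto_sin_sub_mul_cos_div_cube.div tendsto_sin_div_self one_ne_zero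
  rw [div_one] at h
  refine h.congr' ?_
  filter_upwards [self_mem_nhdsWithin, tendsto_sin_div_self.eventually_ne one_ne_zero]
    with x (hx : x ≠ 0) hsinc
  have hsin : sin x ≠ 0 := left_ne_zero_of_mul (by simpa [div_eq_mul_inv] using hsinc)
  simp only [Pi.div_apply, tan_eq_sin_div_cos]
  field_simp

lemma tendsto_div_sqrt_three_mul_one_sub_div_tan :
    Tendsto (fun x => x / √(3 * (1 - x / tan x))) (𝓝[>] 0) (𝓝 1) := by
  have h := (((tendsto_one_sub_div_tan_div_sq.mono_left (nhdsGT_le_nhdsNE 0)).const_mul 3).sqrt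
    ).inv₀ (by norm_num)
  rw [mul_one_div_cancel three_ne_zero, sqrt_one, inv_one] at h
  refine h.congr' ?_
  filter_upwards [self_mem_nhdsWithin] with x (hx : 0 < x)
  rw [← mul_div_assoc, sqrt_div' _ (sq_nonneg x), sqrt_sq hx.le, inv_div]

lemma tan_eq_div_iff_tan_div_self_eq {x : ℝ} (hx : x ≠ 0) (c : ℝ) :
    tan x = x / c ↔ tan x / x = c⁻¹ := by
  rw [div_eq_iff hx, div_eq_inv_mul]

/-- `x_M(δ)`; a junk value unless `0 < δ < 1`. -/
noncomputable def minnaertRoot (δ : ℝ) : ℝ :=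
  Function.invFunOn (fun x => tan x / x) (Ioo 0 (π / 2)) (1 - δ)⁻¹

lemma minnaertRoot_spec {δ : ℝ} (hδ : δ ∈ Ioo 0 1) :
    minnaertRoot δ ∈ Ioo 0 (π / 2) ∧
      tan (minnaertRoot δ) / minnaertRoot δ = (1 - δ)⁻¹ :=
  Function.invFunOn_pos <| exists_tan_div_self_eq <|
    (one_lt_inv₀ (by linarith [hδ.2])).2 (by linarith [hδ.1])

lemma eq_minnaertRoot {δ x : ℝ} (hδ : δ ∈ Ioo 0 1) (hx : x ∈ Ioo 0 (π / 2))
    (h : tan x / x = (1 - δ)⁻¹) : x = minnaertRoot δ :=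
  strictMonoOn_tan_div_self.injOn hx (minnaertRoot_spec hδ).1 <|
    h.trans (minnaertRoot_spec hδ).2.symm

lemma one_sub_div_tan_minnaertRoot {δ : ℝ} (hδ : δ ∈ Ioo 0 1) :
    1 - minnaertRoot δ / tan (minnaertRoot δ) = δ := by
  rw [← inv_div, (minnaertRoot_spec hδ).2, inv_inv, sub_sub_cancel]

lemma tendsto_minnaertRoot : Tendsto minnaertRoot (𝓝[>] 0) (𝓝[>] 0) := by
  refine (nhdsGT_basis 0).tendsto_right_iff.2 fun ε hε => ?_
  set ε' := min ε 1
  have hε' : ε' ∈ Ioo 0 (π / 2) :=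
    ⟨lt_min hε one_pos, (min_le_right _ _).trans_lt (by linarith [pi_gt_three])⟩
  have h1 : 1 < tan ε' / ε' := (one_lt_div hε'.1).2 (lt_tan hε'.1 hε'.2)
  have hinv : Tendsto (fun δ : ℝ => (1 - δ)⁻¹) (𝓝[>] 0) (𝓝 1) := by
    have h : ContinuousAt (fun δ : ℝ => (1 - δ)⁻¹) 0 := by fun_prop (disch := norm_num)
    simpa using h.tendsto.mono_left nhdsWithin_le_nhds
  filter_upwards [hinv.eventually (gt_mem_nhds h1), Ioo_mem_nhdsGT one_pos] with δ hδε hδ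
  obtain ⟨hmem, hroot⟩ := minnaertRoot_spec hδ
  refine ⟨hmem.1, lt_of_lt_of_le ?_ (min_le_left ε 1)⟩
  rw [← strictMonoOn_tan_div_self.lt_iff_lt hmem hε']
  exact hroot.trans_lt hδε

/-- for 0 < δ < 1, tan x = x/(1-δ) has a unique solution x_M in
(0, π/2); x_M → 0 as δ → 0⁺, and x_M/√(3δ) → 1 as δ → 0⁺. -/
theorem minnaert_root_exists_unique_asymptotics :
    ∃ m : ℝ → ℝ,
      (∀ δ ∈ Set.Ioo (0:ℝ) 1,
        m δ ∈ Set.Ioo 0 (Real.pi / 2) ∧ Real.tan (m δ) = m δ / (1 - δ) ∧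
        ∀ x ∈ Set.Ioo (0:ℝ) (Real.pi / 2), Real.tan x = x / (1 - δ) → x = m δ) ∧
      Tendsto m (𝓝[>] 0) (𝓝 0) ∧
      Tendsto (fun δ => m δ / Real.sqrt (3 * δ)) (𝓝[>] 0) (𝓝 1) := by
  refine ⟨minnaertRoot, fun δ hδ => ⟨(minnaertRoot_spec hδ).1, ?_, fun x hx h => ?_⟩,
    tendsto_minnaertRoot.mono_right nhdsWithin_le_nhds, ?_⟩
  · rw [tan_eq_div_iff_tan_div_self_eq (minnaertRoot_spec hδ).1.1.ne']
    exact (minnaertRoot_spec hδ).2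
  · rw [tan_eq_div_iff_tan_div_self_eq hx.1.ne'] at h
    exact eq_minnaertRoot hδ hx h
  · refine (tendsto_div_sqrt_three_mul_one_sub_div_tan.comp tendsto_minnaertRoot).congr' ?_
    filter_upwards [Ioo_mem_nhdsGT one_pos] with δ hδ
    rw [Function.comp_apply, one_sub_div_tan_minnaertRoot hδ]
end

section
/- The function g(x) = 1 - x cot(x), extended continuously by g(0) = 0, is strictly increasing on [0, π), satisfies g(x) = x²/3 + O(x⁴) near 0, and g(x) → +∞ as x → π⁻. -/
/-!
On `(0, π)` we have `g x - x²/3 = (sin x (1 - x²/3) - x cos x) / sin x`. The Taylor bounds for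
`sin` (to order 5) and `cos` (to order 4) make the numerator `O(x⁵)`, and `|sin x| ≥ 2|x|/π`,
which gives the expansion at `0` and, with it, continuity of `g` at `0`. On `(0, π)` the
derivative of `g` is `(x - sin x cos x) / sin² x = (2x - sin 2x) / (2 sin² x) > 0`. Near `π`,
`x cos x → -π` while `sin x → 0⁺`.
-/

open Real Filter Topology Asymptotics Set

lemma abs_sin_mul_one_sub_sq_div_three_sub_mul_cos_le {x : ℝ} (hx : |x| ≤ 1) :
    |sin x * (1 - x ^ 2 / 3) - x * cos x| ≤ |x| ^ 5 / 8 := by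
  have hsq : x ^ 2 ≤ 1 := by nlinarith [sq_abs x, abs_nonneg x]
  have hfactor : |1 - x ^ 2 / 3| ≤ 1 := abs_le.2 ⟨by linarith, by nlinarith [sq_nonneg x]⟩
  calc |sin x * (1 - x ^ 2 / 3) - x * cos x|
      = |x ^ 5 / 18 + (sin x - (x - x ^ 3 / 6)) * (1 - x ^ 2 / 3)
          - x * (cos x - (1 - x ^ 2 / 2))| := by ring_nf
    _ ≤ |x| ^ 5 / 18 + |x| ^ 5 / 100 * 1 + |x| * (|x| ^ 4 * (5 / 96)) := by
      grw [abs_sub, abs_add_le, abs_mul, abs_mul, sin_bound hx, cos_bound hx, hfactor]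
      simp [abs_div, abs_pow]
    _ ≤ |x| ^ 5 / 8 := by ring_nf; nlinarith [pow_nonneg (abs_nonneg x) 5]

lemma abs_one_sub_mul_cos_div_sin_sub_sq_div_three_le {x : ℝ} (hx₀ : x ≠ 0) (hx : |x| ≤ 1) :
    |1 - x * (cos x / sin x) - x ^ 2 / 3| ≤ x ^ 4 / 4 := by
  have hsin : 2 / π * |x| ≤ |sin x| :=
    mul_abs_le_abs_sin (hx.trans (by linarith [pi_gt_three]))
  have hsin₀ : sin x ≠ 0 := by
    rw [← abs_pos]; exact lt_of_lt_of_le (by positivity) hsin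
  have heq : 1 - x * (cos x / sin x) - x ^ 2 / 3
      = (sin x * (1 - x ^ 2 / 3) - x * cos x) / sin x := by
    field_simp; ring
  rw [heq, abs_div, div_le_iff₀ (abs_pos.2 hsin₀), ← Even.pow_abs (⟨2, rfl⟩ : Even 4)]
  calc |sin x * (1 - x ^ 2 / 3) - x * cos x| ≤ |x| ^ 5 / 8 :=
        abs_sin_mul_one_sub_sq_div_three_sub_mul_cos_le hx
    _ ≤ |x| ^ 4 / 4 * (2 / π * |x|) := by
      rw [show |x| ^ 4 / 4 * (2 / π * |x|) = |x| ^ 5 / (2 * π) by field_simp; ring]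
      gcongr; linarith [pi_lt_four]
    _ ≤ |x| ^ 4 / 4 * |sin x| := by gcongr

lemma sin_mul_cos_lt_self {x : ℝ} (hx : 0 < x) : sin x * cos x < x := by
  have := sin_lt (by positivity : 0 < 2 * x)
  rw [sin_two_mul] at this
  linarith

lemma hasDerivAt_one_sub_mul_cos_div_sin {x : ℝ} (hx : sin x ≠ 0) :
    HasDerivAt (fun y => 1 - y * (cos y / sin y)) ((x - sin x * cos x) / sin x ^ 2) x := by
  refine (((hasDerivAt_id' x).mul ((hasDerivAt_cos x).div (hasDerivAt_sin x) hx)).const_sub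
    1).congr_deriv ?_
  simp only [Pi.div_apply]
  field_simp
  linear_combination x * sin_sq_add_cos_sq x

lemma tendsto_one_sub_mul_cos_div_sin_nhdsLT_pi :
    Tendsto (fun x => 1 - x * (cos x / sin x)) (𝓝[<] π) atTop := by
  have hsin : Tendsto sin (𝓝[<] π) (𝓝[>] 0) := by
    refine tendsto_nhdsWithin_of_tendsto_nhds_of_eventually_within _ ?_ ?_
    · exact (continuous_sin.tendsto' π 0 sin_pi).mono_left nhdsWithin_le_nhds
    · filter_upwards [Ioo_mem_nhdsLT pi_pos] with y hy using sin_pos_of_mem_Ioo hy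
  have hnum : Tendsto (fun x => -(x * cos x)) (𝓝[<] π) (𝓝 π) :=
    ((continuous_id.mul continuous_cos).neg.tendsto' π π (by simp)).mono_left
      nhdsWithin_le_nhds
  refine ((tendsto_const_nhds (x := (1 : ℝ))).add_atTop
    (hnum.pos_mul_atTop pi_pos (tendsto_inv_nhdsGT_zero.comp hsin))).congr fun x => ?_
  simp only [Function.comp_apply]
  ring

lemma isBigO_sub_sq_div_three_of_eqOn {g : ℝ → ℝ} (hg0 : g 0 = 0)
    (hg : EqOn g (fun x => 1 - x * (cos x / sin x)) (Ioo 0 π)) :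
    (fun x => g x - x ^ 2 / 3) =O[𝓝[≥] 0] (fun x => x ^ 4) := by
  refine IsBigO.of_bound (1 / 4) ?_
  filter_upwards [Icc_mem_nhdsGE (zero_lt_one' ℝ)] with x ⟨hx₀, hx₁⟩
  rw [norm_of_nonneg (by positivity : 0 ≤ x ^ 4), Real.norm_eq_abs]
  rcases hx₀.eq_or_lt with rfl | hx₀
  · simp [hg0]
  · rw [hg ⟨hx₀, hx₁.trans_lt (by linarith [pi_gt_three])⟩]
    linarith [abs_one_sub_mul_cos_div_sin_sub_sq_div_three_le hx₀.ne'
      (abs_le.2 ⟨by linarith, hx₁⟩)]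

lemma continuousWithinAt_Ici_zero_of_isBigO {g : ℝ → ℝ} (hg0 : g 0 = 0)
    (hO : (fun x => g x - x ^ 2 / 3) =O[𝓝[≥] 0] (fun x => x ^ 4)) :
    ContinuousWithinAt g (Ici 0) 0 := by
  have hpow (n : ℕ) (hn : n ≠ 0) : Tendsto (fun x : ℝ => x ^ n) (𝓝[≥] 0) (𝓝 0) :=
    ((continuous_pow n).tendsto' 0 0 (zero_pow hn)).mono_left nhdsWithin_le_nhds
  simpa [ContinuousWithinAt, hg0] using
    (hO.trans_tendsto (hpow 4 (by norm_num))).add ((hpow 2 (by norm_num)).div_const 3)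

lemma strictMonoOn_Ico_of_eqOn {g : ℝ → ℝ}
    (hg : EqOn g (fun x => 1 - x * (cos x / sin x)) (Ioo 0 π))
    (h0 : ContinuousWithinAt g (Ici 0) 0) : StrictMonoOn g (Ico 0 π) := by
  have hderiv (x : ℝ) (hx : x ∈ Ioo 0 π) :
      HasDerivAt g ((x - sin x * cos x) / sin x ^ 2) x :=
    (hasDerivAt_one_sub_mul_cos_div_sin (sin_pos_of_mem_Ioo hx).ne').congr_of_eventuallyEq
      (hg.eventuallyEq_of_mem (Ioo_mem_nhds hx.1 hx.2))
  refine strictMonoOn_of_deriv_pos (convex_Ico 0 π) (fun x hx => ?_) fun x hx => ?_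
  · rcases hx.1.eq_or_lt with rfl | hx₀
    · exact h0.mono Ico_subset_Ici_self
    · exact (hderiv x ⟨hx₀, hx.2⟩).continuousAt.continuousWithinAt
  · rw [interior_Ico] at hx
    rw [(hderiv x hx).deriv]
    exact div_pos (sub_pos.2 (sin_mul_cos_lt_self hx.1)) (pow_pos (sin_pos_of_mem_Ioo hx) 2)

/-- g(x) = 1 - x cot x (with g(0) = 0) is strictly increasing on
[0, π), satisfies g(x) = x²/3 + O(x⁴) near 0 (from the right), and g(x) → +∞ as
x → π⁻. -/
theorem one_sub_x_cot_x_properties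
    (g : ℝ → ℝ)
    (hg0 : g 0 = 0)
    (hg : ∀ x ∈ Set.Ioo (0:ℝ) Real.pi, g x = 1 - x * (Real.cos x / Real.sin x)) :
    StrictMonoOn g (Set.Ico 0 Real.pi) ∧
    (fun x => g x - x ^ 2 / 3) =O[𝓝[≥] 0] (fun x => x ^ 4) ∧
    Tendsto g (𝓝[<] Real.pi) atTop := by
  have hO := isBigO_sub_sq_div_three_of_eqOn hg0 hg
  refine ⟨strictMonoOn_Ico_of_eqOn hg (continuousWithinAt_Ici_zero_of_isBigO hg0 hO), hO, ?_⟩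
  exact tendsto_one_sub_mul_cos_div_sin_nhdsLT_pi.congr'
    (EqOn.eventuallyEq_of_mem hg (Ioo_mem_nhdsLT pi_pos)).symm
end
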